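/- The sections σ₁ = (0, z⁻¹, 0) and σ₂ = (0, z⁻², 0) define nonzero classes in H¹(W₃, TW₃): σ_l (l = 1,2) is not holomorphic on the U-chart, and its T-transform equals (0, z^{3-l}, 0) = (0, ξ^{l-3}, 0), which is not holomorphic on V; hence σ_l is not a coboundary. -/

import Mathlib

/-!
The cocycles σ₁ = (0, z⁻¹, 0) and σ₂ = (0, z⁻², 0) define nonzero classes in
H¹(W₃, TW₃), where W₃ = Tot(O_{ℙ¹}(-3) ⊕ O_{ℙ¹}(1)) has transition
(ξ,v₁,v₂) = (z⁻¹, z³u₁, z⁻¹u₂) and tangent transition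
T = [[-z⁻²,0,0],[3z²u₁,z³,0],[-z⁻²u₂,0,z⁻¹]]: neither is holomorphic on U,
and their T-transforms (0, z^{3-l}, 0) = (0, ξ^{l-3}, 0) are not holomorphic
on V, so neither is a coboundary.
-/

noncomputable section
namespace Stmt11

abbrev S3 := (ℤ × ℕ × ℕ) → Fin 3 → ℂ

def holU : Set S3 := {σ | ∀ p : ℤ × ℕ × ℕ, p.1 < 0 → σ p = 0}

def holV : Set S3 := {σ | ∀ p : ℤ × ℕ × ℕ, 3 * (p.2.1 : ℤ) - (p.2.2 : ℤ) < p.1 → σ p = 0}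

def applyT (σ : S3) : S3 := fun p k =>
  if k = 0 then -σ (p.1 + 2, p.2.1, p.2.2) 0
  else if k = 1 then
    3 * (if 1 ≤ p.2.1 then σ (p.1 - 2, p.2.1 - 1, p.2.2) 0 else 0)
      + σ (p.1 - 3, p.2.1, p.2.2) 1
  else
    -(if 1 ≤ p.2.2 then σ (p.1 + 2, p.2.1, p.2.2 - 1) 0 else 0)
      + σ (p.1 + 1, p.2.1, p.2.2) 2

def coboundaries : Submodule ℂ S3 :=
  Submodule.span ℂ {σ | ∃ α β, α ∈ holU ∧ β ∈ holV ∧ applyT σ = applyT α + β}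

abbrev H1 := S3 ⧸ coboundaries

/-- σ_l = (0, z^{-l}, 0). -/
def σc (l : ℤ) : S3 := fun p k => if k = 1 ∧ p = (-l, 0, 0) then 1 else 0


/-- Evaluation at (p,1) as a linear map. -/
def evalL (p : ℤ × ℕ × ℕ) : S3 →ₗ[ℂ] ℂ where
  toFun σ := σ p 1
  map_add' := fun _ _ => rfl
  map_smul' := fun _ _ => rfl

lemma not_mem_coboundaries (l : ℤ) (hl0 : 0 < l) (hl3 : l < 3) :
    σc l ∉ coboundaries := by
  intro hmem
  have hker : coboundaries ≤ LinearMap.ker (evalL (-l, 0, 0)) := by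
    rw [coboundaries, Submodule.span_le]
    rintro σ ⟨α, β, hα, hβ, hT⟩
    have h1 := congrFun (congrFun hT (3 - l, 0, 0)) 1
    simp only [applyT, Pi.add_apply] at h1
    norm_num at h1
    have hα0 : α (-l, (0:ℕ), (0:ℕ)) = 0 := by
      apply hα; simp; omega
    have hβ0 : β (3 - l, (0:ℕ), (0:ℕ)) = 0 := by
      apply hβ; simp; omega
    simp only [SetLike.mem_coe, LinearMap.mem_ker, evalL, LinearMap.coe_mk,
      AddHom.coe_mk]
    have hz : ((0:ℕ), (0:ℕ)) = (0 : ℕ × ℕ) := rfl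
    rw [hz] at hα0 hβ0 h1 ⊢
    rw [h1, hα0, hβ0]; simp
  have := hker hmem
  simp [evalL, LinearMap.mem_ker, σc] at this

theorem stmt_11 :
    (Submodule.Quotient.mk (σc 1) : H1) ≠ 0 ∧
    (Submodule.Quotient.mk (σc 2) : H1) ≠ 0 := by
  constructor <;>
  · rw [Ne, Submodule.Quotient.mk_eq_zero]
    exact not_mem_coboundaries _ (by norm_num) (by norm_num)

end Stmt11
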